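/- Let N = 3 and θ = (0, 3π/4, 5π/4). Then θ is a critical point of V (all three partial derivatives of V vanish at θ), and the Hessian of V at θ has exactly one strictly positive eigenvalue, exactly one strictly negative eigenvalue, and one zero eigenvalue (with eigenvector (1,1,1)); i.e. θ is a nondegenerate saddle point of V. -/

import Mathlib

/-!
Write `V θ = -∑_{i<j} f (θ i - θ j)` with `f x = cos x + log (2 - 2 cos x) / 2`. Away from
collisions `V` is smooth, its gradient is `-∑_{i<j} f' (θ i - θ j) (e i - e j)` and its Hessian is
`-∑_{i<j} f'' (θ i - θ j) (e i - e j) (e i - e j)ᵀ`. At `θ = (0, 3π/4, 5π/4)` the differences are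
`-3π/4, -5π/4, -π/2`, where `f' = 1/2, -1/2, 1/2` (so the gradient vanishes) and
`f'' = √2 - 1, √2 - 1, -1/2`. The resulting Hessian has the eigenbasis `(0, 1, -1)`,
`(2, -1, -1)`, `(1, 1, 1)` with eigenvalues `2 - √2 > 0`, `3 - 3√2 < 0` and `0`.
-/

open Real Finset Matrix

/-- The limit potential of the (1+N)-vortex problem:
`V(θ) = -∑_{i<j} (cos(θᵢ-θⱼ) + (1/2)·log(2 - 2cos(θᵢ-θⱼ)))`. -/
noncomputable def vortexPotential (N : ℕ) (θ : Fin N → ℝ) : ℝ :=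
  - ∑ i : Fin N, ∑ j : Fin N,
      if i < j then
        Real.cos (θ i - θ j) + (1 / 2) * Real.log (2 - 2 * Real.cos (θ i - θ j))
      else 0

/-- The Hessian matrix of the potential `V` at `θ`. -/
noncomputable def vortexHessian (N : ℕ) (θ : Fin N → ℝ) : Matrix (Fin N) (Fin N) ℝ :=
  fun i j => iteratedFDeriv ℝ 2 (vortexPotential N) θ ![Pi.single i 1, Pi.single j 1]

section Eigenbasis

variable {ι n : Type*} [Fintype ι] [Fintype n] {A : Matrix n n ℝ}
  {b : Module.Basis ι ℝ (n → ℝ)} {d : ι → ℝ}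

lemma repr_mulVec_of_eigenbasis (hb : ∀ i, A *ᵥ b i = d i • b i) (v : n → ℝ) (i : ι) :
    b.repr (A *ᵥ v) i = d i * b.repr v i := by
  have h : A *ᵥ v = ∑ j, (d j * b.repr v j) • b j := by
    conv_lhs => rw [← b.sum_repr v]
    simp only [mulVec_sum, mulVec_smul, hb, smul_smul, mul_comm]
  rw [h, b.repr_sum_self]

lemma mulVec_eq_smul_iff_of_eigenbasis (hb : ∀ i, A *ᵥ b i = d i • b i) (μ : ℝ) (v : n → ℝ) :
    A *ᵥ v = μ • v ↔ ∀ i, (d i - μ) * b.repr v i = 0 := by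
  simp only [b.ext_elem_iff, repr_mulVec_of_eigenbasis hb, map_smul, Finsupp.smul_apply,
    smul_eq_mul, sub_mul, sub_eq_zero]

lemma exists_mulVec_eq_smul_iff_of_eigenbasis (hb : ∀ i, A *ᵥ b i = d i • b i) (μ : ℝ) :
    (∃ v, v ≠ 0 ∧ A *ᵥ v = μ • v) ↔ ∃ i, d i = μ := by
  constructor
  · rintro ⟨v, hv, hAv⟩
    obtain ⟨i, hi⟩ : ∃ i, b.repr v i ≠ 0 := by
      by_contra! h
      exact hv (b.ext_elem_iff.2 fun i => by simp [h])
    have hrepr := (mulVec_eq_smul_iff_of_eigenbasis hb μ v).1 hAv i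
    exact ⟨i, sub_eq_zero.1 ((mul_eq_zero.1 hrepr).resolve_right hi)⟩
  · rintro ⟨i, rfl⟩
    exact ⟨b i, b.ne_zero i, hb i⟩

lemma mulVec_eq_zero_iff_of_eigenbasis (hb : ∀ i, A *ᵥ b i = d i • b i) {k : ι} (hk : d k = 0)
    (hd : ∀ i ≠ k, d i ≠ 0) (v : n → ℝ) : A *ᵥ v = 0 ↔ ∃ c : ℝ, v = c • b k := by
  constructor
  · intro hAv
    have hrepr := (mulVec_eq_smul_iff_of_eigenbasis hb 0 v).1 (by rw [hAv, zero_smul])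
    refine ⟨b.repr v k, ?_⟩
    conv_lhs => rw [← b.sum_repr v]
    refine sum_eq_single k (fun i _ hik => ?_) (by simp)
    rw [(mul_eq_zero.1 (hrepr i)).resolve_left (by simpa using hd i hik), zero_smul]
  · rintro ⟨c, rfl⟩
    rw [mulVec_smul, hb, hk, zero_smul, smul_zero]

end Eigenbasis

noncomputable def pairPotential (x : ℝ) : ℝ := cos x + 1 / 2 * log (2 - 2 * cos x)

noncomputable def pairPotentialDeriv (x : ℝ) : ℝ := sin x * ((2 - 2 * cos x)⁻¹ - 1)

noncomputable def pairPotentialDeriv2 (x : ℝ) : ℝ := -cos x - (2 - 2 * cos x)⁻¹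

section PairPotential

variable {x : ℝ}

lemma two_sub_two_mul_cos_ne_zero (hx : cos x ≠ 1) : 2 - 2 * cos x ≠ 0 := by
  contrapose! hx; linarith

lemma hasDerivAt_two_sub_two_mul_cos (x : ℝ) :
    HasDerivAt (fun y => 2 - 2 * cos y) (2 * sin x) x := by
  simpa using ((hasDerivAt_cos x).const_mul 2).const_sub 2

lemma hasDerivAt_pairPotential (hx : cos x ≠ 1) :
    HasDerivAt pairPotential (pairPotentialDeriv x) x := by
  have hd := two_sub_two_mul_cos_ne_zero hx
  refine ((hasDerivAt_cos x).add
    (((hasDerivAt_two_sub_two_mul_cos x).log hd).const_mul (1 / 2))).congr_deriv ?_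
  rw [pairPotentialDeriv]
  field_simp
  ring

lemma hasDerivAt_pairPotentialDeriv (hx : cos x ≠ 1) :
    HasDerivAt pairPotentialDeriv (pairPotentialDeriv2 x) x := by
  have hd := two_sub_two_mul_cos_ne_zero hx
  refine ((hasDerivAt_sin x).mul
    (((hasDerivAt_two_sub_two_mul_cos x).inv hd).sub_const 1)).congr_deriv ?_
  rw [pairPotentialDeriv2, Pi.inv_apply]
  field_simp
  linear_combination -sin_sq_add_cos_sq x

end PairPotential

def orderedPairs (N : ℕ) : Finset (Fin N × Fin N) := univ.filter fun p => p.1 < p.2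

def collisionFree (N : ℕ) : Set (Fin N → ℝ) :=
  {θ | ∀ p ∈ orderedPairs N, cos (θ p.1 - θ p.2) ≠ 1}

noncomputable def pairDiff {N : ℕ} (i j : Fin N) : (Fin N → ℝ) →L[ℝ] ℝ :=
  ContinuousLinearMap.proj (R := ℝ) (φ := fun _ : Fin N => ℝ) i -
    ContinuousLinearMap.proj (R := ℝ) (φ := fun _ : Fin N => ℝ) j

noncomputable def vortexGradient (N : ℕ) (θ : Fin N → ℝ) : (Fin N → ℝ) →L[ℝ] ℝ :=
  -∑ p ∈ orderedPairs N, pairPotentialDeriv (θ p.1 - θ p.2) • pairDiff p.1 p.2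

noncomputable def vortexHessianForm (N : ℕ) (θ : Fin N → ℝ) :
    (Fin N → ℝ) →L[ℝ] (Fin N → ℝ) →L[ℝ] ℝ :=
  -∑ p ∈ orderedPairs N,
    (pairPotentialDeriv2 (θ p.1 - θ p.2) • pairDiff p.1 p.2).smulRight (pairDiff p.1 p.2)

section GeneralN

variable {N : ℕ} {θ : Fin N → ℝ}

lemma vortexPotential_eq_sum (N : ℕ) (θ : Fin N → ℝ) :
    vortexPotential N θ = -∑ p ∈ orderedPairs N, pairPotential (θ p.1 - θ p.2) := by
  rw [vortexPotential, orderedPairs, sum_filter, Fintype.sum_prod_type]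
  rfl

@[simp]
lemma vortexGradient_apply (v : Fin N → ℝ) :
    vortexGradient N θ v =
      -∑ p ∈ orderedPairs N, pairPotentialDeriv (θ p.1 - θ p.2) * (v p.1 - v p.2) := by
  simp [vortexGradient, pairDiff]

@[simp]
lemma vortexHessianForm_apply (u v : Fin N → ℝ) :
    vortexHessianForm N θ u v = -∑ p ∈ orderedPairs N,
      pairPotentialDeriv2 (θ p.1 - θ p.2) * (u p.1 - u p.2) * (v p.1 - v p.2) := by
  simp [vortexHessianForm, pairDiff, mul_assoc]

lemma isOpen_collisionFree : IsOpen (collisionFree N) := by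
  have h : collisionFree N = ⋂ p ∈ orderedPairs N, {θ | cos (θ p.1 - θ p.2) ≠ 1} := by
    ext θ
    simp [collisionFree]
  rw [h]
  exact isOpen_biInter_finset fun _ _ => isOpen_ne_fun (by fun_prop) continuous_const

lemma hasFDerivAt_comp_pairDiff {g : ℝ → ℝ} {g' : ℝ} {i j : Fin N}
    (hg : HasDerivAt g g' (θ i - θ j)) :
    HasFDerivAt (fun θ : Fin N → ℝ => g (θ i - θ j)) (g' • pairDiff i j) θ :=
  hg.comp_hasFDerivAt θ (pairDiff i j).hasFDerivAt

lemma hasFDerivAt_vortexPotential (hθ : θ ∈ collisionFree N) :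
    HasFDerivAt (vortexPotential N) (vortexGradient N θ) θ := by
  rw [funext (vortexPotential_eq_sum N)]
  exact (HasFDerivAt.fun_sum fun _ hp =>
    hasFDerivAt_comp_pairDiff (hasDerivAt_pairPotential (hθ _ hp))).neg

lemma hasFDerivAt_vortexGradient (hθ : θ ∈ collisionFree N) :
    HasFDerivAt (vortexGradient N) (vortexHessianForm N θ) θ :=
  (HasFDerivAt.fun_sum fun _ hp => (hasFDerivAt_comp_pairDiff
    (hasDerivAt_pairPotentialDeriv (hθ _ hp))).smul_const _).neg

lemma vortexHessian_apply (hθ : θ ∈ collisionFree N) (i j : Fin N) :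
    vortexHessian N θ i j = vortexHessianForm N θ (Pi.single i 1) (Pi.single j 1) := by
  have h : fderiv ℝ (vortexPotential N) =ᶠ[nhds θ] vortexGradient N :=
    Filter.eventually_of_mem (isOpen_collisionFree.mem_nhds hθ) fun θ' hθ' =>
      (hasFDerivAt_vortexPotential hθ').fderiv
  rw [vortexHessian, iteratedFDeriv_two_apply, h.fderiv_eq, (hasFDerivAt_vortexGradient hθ).fderiv]
  simp

end GeneralN

lemma cos_three_pi_div_four : cos (3 * π / 4) = -(√2 / 2) := by
  rw [show 3 * π / 4 = π - π / 4 by ring, cos_pi_sub, cos_pi_div_four]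

lemma sin_three_pi_div_four : sin (3 * π / 4) = √2 / 2 := by
  rw [show 3 * π / 4 = π - π / 4 by ring, sin_pi_sub, sin_pi_div_four]

lemma cos_five_pi_div_four : cos (5 * π / 4) = -(√2 / 2) := by
  rw [show 5 * π / 4 = π / 4 + π by ring, cos_add_pi, cos_pi_div_four]

lemma sin_five_pi_div_four : sin (5 * π / 4) = -(√2 / 2) := by
  rw [show 5 * π / 4 = π / 4 + π by ring, sin_add_pi, sin_pi_div_four]

lemma inv_two_add_sqrt_two : (2 + √2)⁻¹ = 1 - √2 / 2 := by
  have h : √2 * √2 = 2 := mul_self_sqrt zero_le_two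
  rw [inv_eq_of_mul_eq_one_right]
  linear_combination -h / 2

lemma pairPotentialDeriv_of_cos_eq {x : ℝ} (hx : cos x = -(√2 / 2)) :
    pairPotentialDeriv x = -(√2 / 2) * sin x := by
  rw [pairPotentialDeriv, hx, show 2 - 2 * -(√2 / 2) = 2 + √2 by ring, inv_two_add_sqrt_two]
  ring

lemma pairPotentialDeriv2_of_cos_eq {x : ℝ} (hx : cos x = -(√2 / 2)) :
    pairPotentialDeriv2 x = √2 - 1 := by
  rw [pairPotentialDeriv2, hx, show 2 - 2 * -(√2 / 2) = 2 + √2 by ring, inv_two_add_sqrt_two]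
  ring

local notation "θ₀" => (![0, 3 * π / 4, 5 * π / 4] : Fin 3 → ℝ)

lemma orderedPairs_three : orderedPairs 3 = {(0, 1), (0, 2), (1, 2)} := by decide

lemma saddle_differences : θ₀ 0 - θ₀ 1 = -(3 * π / 4) ∧ θ₀ 0 - θ₀ 2 = -(5 * π / 4) ∧
    θ₀ 1 - θ₀ 2 = -(π / 2) := by
  refine ⟨?_, ?_, ?_⟩ <;> simp only [Matrix.cons_val] <;> ring

lemma saddle_cos : cos (θ₀ 0 - θ₀ 1) = -(√2 / 2) ∧ cos (θ₀ 0 - θ₀ 2) = -(√2 / 2) ∧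
    cos (θ₀ 1 - θ₀ 2) = 0 := by
  obtain ⟨h01, h02, h12⟩ := saddle_differences
  simp only [h01, h02, h12, cos_neg, cos_three_pi_div_four, cos_five_pi_div_four, cos_pi_div_two,
    and_self]

lemma pairPotentialDeriv_saddle : pairPotentialDeriv (θ₀ 0 - θ₀ 1) = 1 / 2 ∧
    pairPotentialDeriv (θ₀ 0 - θ₀ 2) = -(1 / 2) ∧ pairPotentialDeriv (θ₀ 1 - θ₀ 2) = 1 / 2 := by
  obtain ⟨h01, h02, h12⟩ := saddle_differences
  obtain ⟨c01, c02, c12⟩ := saddle_cos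
  have hs : √2 * √2 = 2 := mul_self_sqrt zero_le_two
  refine ⟨?_, ?_, ?_⟩
  · rw [pairPotentialDeriv_of_cos_eq c01, h01, sin_neg, sin_three_pi_div_four]
    linear_combination hs / 4
  · rw [pairPotentialDeriv_of_cos_eq c02, h02, sin_neg, sin_five_pi_div_four]
    linear_combination -hs / 4
  · rw [pairPotentialDeriv, c12, h12, sin_neg, sin_pi_div_two]
    norm_num

lemma pairPotentialDeriv2_saddle : pairPotentialDeriv2 (θ₀ 0 - θ₀ 1) = √2 - 1 ∧
    pairPotentialDeriv2 (θ₀ 0 - θ₀ 2) = √2 - 1 ∧ pairPotentialDeriv2 (θ₀ 1 - θ₀ 2) = -(1 / 2) := by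
  obtain ⟨c01, c02, c12⟩ := saddle_cos
  refine ⟨pairPotentialDeriv2_of_cos_eq c01, pairPotentialDeriv2_of_cos_eq c02, ?_⟩
  rw [pairPotentialDeriv2, c12]
  norm_num

lemma saddle_mem_collisionFree : θ₀ ∈ collisionFree 3 := by
  obtain ⟨c01, c02, c12⟩ := saddle_cos
  have hs : 0 < √2 := by positivity
  simp only [collisionFree, Set.mem_ofPred_eq, orderedPairs_three, forall_mem_insert,
    mem_singleton, forall_eq, c01, c02, c12]
  refine ⟨?_, ?_, ?_⟩ <;> linarith

lemma sum_orderedPairs_three (f : Fin 3 × Fin 3 → ℝ) :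
    ∑ p ∈ orderedPairs 3, f p = f (0, 1) + f (0, 2) + f (1, 2) := by
  rw [orderedPairs_three, sum_insert (by decide), sum_insert (by decide), sum_singleton, add_assoc]

lemma vortexGradient_saddle : vortexGradient 3 θ₀ = 0 := by
  obtain ⟨d01, d02, d12⟩ := pairPotentialDeriv_saddle
  ext v
  simp only [vortexGradient_apply, sum_orderedPairs_three, d01, d02, d12, _root_.zero_apply]
  ring

lemma vortexHessian_saddle : vortexHessian 3 θ₀ =
    !![2 - 2 * √2, √2 - 1, √2 - 1; √2 - 1, 3 / 2 - √2, -(1 / 2); √2 - 1, -(1 / 2), 3 / 2 - √2] := by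
  obtain ⟨e01, e02, e12⟩ := pairPotentialDeriv2_saddle
  ext i j
  rw [vortexHessian_apply saddle_mem_collisionFree, vortexHessianForm_apply,
    sum_orderedPairs_three, e01, e02, e12]
  fin_cases i <;> fin_cases j <;> simp <;> ring

def saddleEigenvectors : Fin 3 → Fin 3 → ℝ := ![![0, 1, -1], ![2, -1, -1], ![1, 1, 1]]

noncomputable def saddleEigenvalues : Fin 3 → ℝ := ![2 - √2, 3 - 3 * √2, 0]

lemma linearIndependent_saddleEigenvectors : LinearIndependent ℝ saddleEigenvectors := by
  refine Fintype.linearIndependent_iff.2 fun g hg i => ?_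
  have h0 := congrFun hg 0
  have h1 := congrFun hg 1
  have h2 := congrFun hg 2
  simp only [saddleEigenvectors, Fin.sum_univ_three, Finset.sum_apply, Pi.smul_apply,
    Matrix.cons_val, smul_eq_mul, mul_zero, mul_one, mul_neg, zero_add, Pi.zero_apply] at h0 h1 h2
  fin_cases i <;> simp <;> linarith

noncomputable def saddleEigenbasis : Module.Basis (Fin 3) ℝ (Fin 3 → ℝ) :=
  basisOfLinearIndependentOfCardEqFinrank linearIndependent_saddleEigenvectors (by simp)

lemma vortexHessian_saddle_mulVec_eigenbasis (i : Fin 3) :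
    vortexHessian 3 θ₀ *ᵥ saddleEigenbasis i = saddleEigenvalues i • saddleEigenbasis i := by
  rw [vortexHessian_saddle, saddleEigenbasis, coe_basisOfLinearIndependentOfCardEqFinrank]
  ext j
  fin_cases i <;> fin_cases j <;>
    simp [saddleEigenvectors, saddleEigenvalues, Matrix.mulVec, dotProduct, Fin.sum_univ_three] <;>
    ring

/-- For `N = 3`, the point `θ = (0, 3π/4, 5π/4)` is a critical point of
`V`, and the Hessian of `V` there has exactly one strictly positive eigenvalue, exactly
one strictly negative eigenvalue, and one zero eigenvalue with eigenvector `(1,1,1)`;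
i.e. `θ` is a nondegenerate saddle point of `V`. -/
theorem three_vortex_saddle :
    (∀ j : Fin 3,
      fderiv ℝ (vortexPotential 3) ![0, 3 * π / 4, 5 * π / 4] (Pi.single j 1) = 0) ∧
    ∃ a b : ℝ, 0 < a ∧ b < 0 ∧
      (∀ μ : ℝ, (∃ v : Fin 3 → ℝ, v ≠ 0 ∧
          (vortexHessian 3 ![0, 3 * π / 4, 5 * π / 4]).mulVec v = μ • v) ↔
        (μ = a ∨ μ = b ∨ μ = 0)) ∧
      (vortexHessian 3 ![0, 3 * π / 4, 5 * π / 4]).mulVec ![1, 1, 1] = 0 ∧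
      (∀ v : Fin 3 → ℝ,
        (vortexHessian 3 ![0, 3 * π / 4, 5 * π / 4]).mulVec v = 0 ↔
          ∃ c : ℝ, v = c • ![1, 1, 1]) := by
  have hb := vortexHessian_saddle_mulVec_eigenbasis
  have h1 := one_lt_sqrt_two
  have h2 : √2 < 2 := (sqrt_lt' two_pos).2 (by norm_num)
  have hone : saddleEigenbasis 2 = ![1, 1, 1] := by simp [saddleEigenbasis, saddleEigenvectors]
  have hkernel : vortexHessian 3 θ₀ *ᵥ ![1, 1, 1] = 0 := by
    simpa [hone, saddleEigenvalues] using hb 2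
  refine ⟨fun j => ?_, 2 - √2, 3 - 3 * √2, by linarith, by linarith, fun μ => ?_, hkernel,
    fun v => ?_⟩
  · rw [(hasFDerivAt_vortexPotential saddle_mem_collisionFree).fderiv, vortexGradient_saddle]
    rfl
  · rw [exists_mulVec_eq_smul_iff_of_eigenbasis hb, Fin.exists_fin_succ]
    simp [saddleEigenvalues, eq_comm]
  · rw [← hone]
    refine mulVec_eq_zero_iff_of_eigenbasis hb rfl (fun i hi => ?_) v
    fin_cases i <;> simp [saddleEigenvalues] at hi ⊢ <;> linarith
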